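/- arXiv:1007.0143 — 2 statements merged into one kernel-verified Lean document; each statement's English description precedes it below -/
import Mathlib

section
/- Let m, n, p, r, s, t, u be positive natural numbers, let A be a real s×t matrix and B a real t×u matrix. Then ρ_m(A·B) = ρ_{mn}(μ^{p×n}_n(A) · μ^{n×r}_n(B)), where μ^{p×n}_n(A) is the sp×tn block matrix with (i,k) block (n·A_{ik}/(pn))·𝟙_{p×n} and μ^{n×r}_n(B) is the tn×ur block matrix with (k,j) block (n·B_{kj}/(nr))·𝟙_{n×r}. -/
/-!
Summing over the n inner columns of a block, μ_n^{p×n}(A) · μ_n^{n×r}(B) = μ_n^{p×r}(A · B).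
Each entry of C is spread over p·q cells carrying total mass n · C_ij, so the entry sum of
μ_n^{p×q}(C) is n times that of C, and dividing by m · n instead of m gives back ρ_m(C).
-/

open Matrix BigOperators

/-- The matrix valuation ρ_m: sum of all entries divided by m. -/
noncomputable def rho {α β : Type*} [Fintype α] [Fintype β]
    (m : ℕ) (A : Matrix α β ℝ) : ℝ :=
  (∑ i, ∑ j, A i j) / (m : ℝ)

/-- The numeric representation μ^{p×q}_n extended entrywise to a matrix:
each entry `A i j` is replaced by the constant p×q block `(n * A i j / (p*q)) • 𝟙`. -/
noncomputable def muMat (n p q : ℕ) {r s : ℕ} (A : Matrix (Fin r) (Fin s) ℝ) :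
    Matrix (Fin r × Fin p) (Fin s × Fin q) ℝ :=
  fun ik jl => n * A ik.1 jl.1 / (p * q : ℕ)

theorem muMat_mul_muMat {n p r s t u : ℕ} (hn : n ≠ 0)
    (A : Matrix (Fin s) (Fin t) ℝ) (B : Matrix (Fin t) (Fin u) ℝ) :
    muMat n p n A * muMat n n r B = muMat n p r (A * B) := by
  ext ⟨i, a⟩ ⟨j, b⟩
  have hn' : (n : ℝ) ≠ 0 := Nat.cast_ne_zero.mpr hn
  simp only [muMat, mul_apply, Fintype.sum_prod_type, Finset.sum_const, Finset.card_univ,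
    Fintype.card_fin, nsmul_eq_mul, Finset.sum_div, Finset.mul_sum, Nat.cast_mul]
  refine Finset.sum_congr rfl fun k _ => ?_
  field_simp

theorem rho_muMat {m n p q r s : ℕ} (hn : n ≠ 0) (hp : p ≠ 0) (hq : q ≠ 0)
    (A : Matrix (Fin r) (Fin s) ℝ) :
    rho (m * n) (muMat n p q A) = rho m A := by
  have hn' : (n : ℝ) ≠ 0 := Nat.cast_ne_zero.mpr hn
  have hp' : (p : ℝ) ≠ 0 := Nat.cast_ne_zero.mpr hp
  have hq' : (q : ℝ) ≠ 0 := Nat.cast_ne_zero.mpr hq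
  simp only [rho, muMat, Fintype.sum_prod_type, Finset.sum_const, Finset.card_univ,
    Fintype.card_fin, nsmul_eq_mul, ← Finset.sum_div, ← Finset.mul_sum, Nat.cast_mul]
  field_simp

theorem stmt_7_general (m n p r s t u : ℕ) (hn : 0 < n) (hp : 0 < p)
    (hr : 0 < r)
    (A : Matrix (Fin s) (Fin t) ℝ) (B : Matrix (Fin t) (Fin u) ℝ) :
    rho m (A * B) = rho (m * n) (muMat n p n A * muMat n n r B) := by
  rw [muMat_mul_muMat hn.ne', rho_muMat hn.ne' hp.ne' hr.ne']

theorem stmt_7 (m n p r s t u : ℕ) (hm : 0 < m) (hn : 0 < n) (hp : 0 < p)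
    (hr : 0 < r) (hs : 0 < s) (ht : 0 < t) (hu : 0 < u)
    (A : Matrix (Fin s) (Fin t) ℝ) (B : Matrix (Fin t) (Fin u) ℝ) :
    rho m (A * B) = rho (m * n) (muMat n p n A * muMat n n r B) :=
  stmt_7_general m n p r s t u hn hp hr A B
end

section
/- Let n, N be positive natural numbers and let A_1, …, A_N be real n×n matrices such that for each i with 1 ≤ i ≤ N, either (1) A_i is a scalar matrix (A_i = c·I_n for some real c) or a constant matrix (A_i = c·𝟙_{n×n} for some real c), or (2) A_i = J_n^{p_i} for some natural number p_i and both A_{i−1} (if i > 1) and A_{i+1} (if i < N) are constant matrices. Then ρ_n(A_1·A_2·⋯·A_N) = ρ_n(A_1)·ρ_n(A_2)·⋯·ρ_n(A_N). -/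
open Matrix BigOperators

/-- A scalar matrix: c·I. -/
def IsScalarMat {n : ℕ} (A : Matrix (Fin n) (Fin n) ℝ) : Prop :=
  ∃ c : ℝ, A = c • (1 : Matrix (Fin n) (Fin n) ℝ)

/-- A constant matrix: c·𝟙 where 𝟙 is the all-ones matrix. -/
def IsConstMat {n : ℕ} (A : Matrix (Fin n) (Fin n) ℝ) : Prop :=
  ∃ c : ℝ, A = fun _ _ => c

/-- The n×n Jordan block: ones on the superdiagonal, zeros elsewhere. -/
def jordan (n : ℕ) : Matrix (Fin n) (Fin n) ℝ :=
  fun i j => if (j : ℕ) = (i : ℕ) + 1 then 1 else 0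

/-! For `M : Matrix α (Fin n) ℝ` with constant rows and any `R`, or any `M` and `R` with constant
columns, one has `n · Σ(M R) = ΣM · ΣR` for the entry sums `Σ`, which is exactly
`ρ_n(M R) = ρ_n(M) ρ_n(R)`; the same identity holds trivially for a scalar `M`. Now peel off the
first factor of `A₁ ⋯ A_N`: a scalar or constant one is covered directly, and a power of `J_n`
is followed by a constant matrix `C`, so the rest of the product, `C T`, has constant columns. -/

def entrySum {α β : Type*} [Fintype α] [Fintype β] (A : Matrix α β ℝ) : ℝ :=
  ∑ i, ∑ j, A i j

section

variable {α β γ : Type*} [Fintype α] [Fintype β] [Fintype γ] {n : ℕ}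

lemma rho_eq_entrySum_div (m : ℕ) (A : Matrix α β ℝ) :
    rho m A = entrySum A / m :=
  rfl

lemma entrySum_transpose (A : Matrix α β ℝ) :
    entrySum Aᵀ = entrySum A :=
  Finset.sum_comm

lemma rho_transpose (m : ℕ) (A : Matrix α β ℝ) :
    rho m Aᵀ = rho m A := by
  rw [rho_eq_entrySum_div, rho_eq_entrySum_div, entrySum_transpose]

lemma rho_mul_of_natCast_mul_entrySum {M : Matrix α (Fin n) ℝ} {R : Matrix (Fin n) γ ℝ}
    (h : n * entrySum (M * R) = entrySum M * entrySum R) :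
    rho n (M * R) = rho n M * rho n R := by
  simp only [rho_eq_entrySum_div]
  rcases eq_or_ne (n : ℝ) 0 with hn | hn
  · simp [hn]
  · field_simp
    linear_combination h

lemma natCast_mul_entrySum_mul_of_row_const (M : Matrix α (Fin n) ℝ) (R : Matrix (Fin n) γ ℝ)
    (hM : ∀ i k k', M i k = M i k') :
    n * entrySum (M * R) = entrySum M * entrySum R := by
  -- `M i k` may be replaced by any `M i k'`, so summing over `k'` factors the entry.
  have hentry : ∀ i j, (n : ℝ) * (M * R) i j = (∑ k, M i k) * ∑ k, R k j := by
    intro i j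
    rw [Finset.sum_mul_sum, mul_apply]
    calc (n : ℝ) * ∑ k, M i k * R k j = ∑ _k' : Fin n, ∑ k, M i k * R k j := by simp
      _ = ∑ k', ∑ k, M i k' * R k j :=
        Finset.sum_congr rfl fun k' _ => Finset.sum_congr rfl fun k _ => by rw [hM i k k']
  rw [entrySum, entrySum, ← entrySum_transpose R, entrySum, Finset.sum_mul]
  simp only [Finset.mul_sum, hentry, transpose_apply]

lemma rho_mul_of_row_const (M : Matrix α (Fin n) ℝ) (R : Matrix (Fin n) γ ℝ)
    (hM : ∀ i k k', M i k = M i k') :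
    rho n (M * R) = rho n M * rho n R :=
  rho_mul_of_natCast_mul_entrySum (natCast_mul_entrySum_mul_of_row_const M R hM)

lemma rho_mul_of_col_const (M : Matrix α (Fin n) ℝ) (R : Matrix (Fin n) γ ℝ)
    (hR : ∀ k k' j, R k j = R k' j) :
    rho n (M * R) = rho n M * rho n R := by
  rw [← rho_transpose, transpose_mul, rho_mul_of_row_const Rᵀ Mᵀ fun j k k' => hR k k' j,
    rho_transpose, rho_transpose, mul_comm]

lemma IsConstMat.row_const {C : Matrix (Fin n) (Fin n) ℝ} (hC : IsConstMat C) :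
    ∀ i k k', C i k = C i k' := by
  obtain ⟨c, rfl⟩ := hC
  exact fun _ _ _ => rfl

lemma IsConstMat.col_const_mul {C : Matrix (Fin n) (Fin n) ℝ} (hC : IsConstMat C)
    (T : Matrix (Fin n) (Fin n) ℝ) : ∀ k k' j, (C * T) k j = (C * T) k' j := by
  obtain ⟨c, hc⟩ := hC
  intro k k' j
  rw [mul_apply, mul_apply, hc]

lemma rho_mul_of_isScalarMat {S : Matrix (Fin n) (Fin n) ℝ} (hS : IsScalarMat S)
    (R : Matrix (Fin n) (Fin n) ℝ) : rho n (S * R) = rho n S * rho n R := by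
  obtain ⟨c, rfl⟩ := hS
  apply rho_mul_of_natCast_mul_entrySum
  simp only [entrySum, smul_mul, one_mul, Matrix.smul_apply, smul_eq_mul, one_apply, mul_ite,
    mul_one, mul_zero, Finset.sum_ite_eq, Finset.mem_univ, if_true, Finset.sum_const,
    Finset.card_univ, Fintype.card_fin, nsmul_eq_mul, ← Finset.mul_sum]
  ring

theorem rho_prod_ofFn {N : ℕ} (A : Fin (N + 1) → Matrix (Fin n) (Fin n) ℝ)
    (hA : ∀ i : Fin (N + 1), IsScalarMat (A i) ∨ IsConstMat (A i) ∨
      ∀ h : (i : ℕ) + 1 < N + 1, IsConstMat (A ⟨i + 1, h⟩)) :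
    rho n (List.ofFn A).prod = ∏ i, rho n (A i) := by
  induction N with
  | zero => simp
  | succ N ih =>
    rw [List.ofFn_succ, List.prod_cons, Fin.prod_univ_succ,
      ← ih (fun i => A i.succ) fun i =>
        (hA i.succ).imp_right (Or.imp_right fun hnext h => hnext (Nat.succ_lt_succ h))]
    rcases hA 0 with hS | hC | hnext
    · exact rho_mul_of_isScalarMat hS _
    · exact rho_mul_of_row_const _ _ hC.row_const
    · rw [List.ofFn_succ, List.prod_cons]
      exact rho_mul_of_col_const _ _ ((hnext (by simp)).col_const_mul _)

end

theorem stmt_17_general (n N : ℕ) (hN : 0 < N)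
    (A : Fin N → Matrix (Fin n) (Fin n) ℝ)
    (hA : ∀ i : Fin N,
      (IsScalarMat (A i) ∨ IsConstMat (A i)) ∨
      (∃ p : ℕ, A i = jordan n ^ p ∧
        (∀ h : 0 < (i : ℕ),
          IsConstMat (A ⟨(i : ℕ) - 1, Nat.lt_of_le_of_lt (Nat.sub_le _ _) i.isLt⟩)) ∧
        (∀ h : (i : ℕ) + 1 < N, IsConstMat (A ⟨(i : ℕ) + 1, h⟩)))) :
    rho n (List.ofFn A).prod = ∏ i : Fin N, rho n (A i) := by
  obtain ⟨N, rfl⟩ := Nat.exists_eq_add_one_of_ne_zero hN.ne'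
  refine rho_prod_ofFn A fun i => ?_
  rcases hA i with (hS | hC) | ⟨_, _, _, hnext⟩
  exacts [Or.inl hS, Or.inr (Or.inl hC), Or.inr (Or.inr hnext)]

theorem stmt_17 (n N : ℕ) (hn : 0 < n) (hN : 0 < N)
    (A : Fin N → Matrix (Fin n) (Fin n) ℝ)
    (hA : ∀ i : Fin N,
      (IsScalarMat (A i) ∨ IsConstMat (A i)) ∨
      (∃ p : ℕ, A i = jordan n ^ p ∧
        (∀ h : 0 < (i : ℕ),
          IsConstMat (A ⟨(i : ℕ) - 1, Nat.lt_of_le_of_lt (Nat.sub_le _ _) i.isLt⟩)) ∧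
        (∀ h : (i : ℕ) + 1 < N, IsConstMat (A ⟨(i : ℕ) + 1, h⟩)))) :
    rho n (List.ofFn A).prod = ∏ i : Fin N, rho n (A i) :=
  stmt_17_general n N hN A hA
end
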